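/- At every point of W^{ijk}, writing a = cosh l_jk, b = cosh l_ki, c = cosh l_ij, the Jacobian matrix ∂(θ^i_jk, θ^j_ki, θ^k_ij)/∂(w_i,w_j,w_k) equals the scalar −2/(sinh θ^k_ij · sinh l_ki · sinh l_jk) times the symmetric matrix M(a,b,c) whose entries are M₁₁ = (c+ab)/(b−1) + (b+ac)/(c−1), M₁₂ = M₂₁ = (a+b−c+1)/(c−1), M₁₃ = M₃₁ = (a+c−b+1)/(b−1), M₂₂ = (c+ab)/(a−1) + (a+bc)/(c−1), M₂₃ = M₃₂ = (b+c−a+1)/(a−1), M₃₃ = (b+ac)/(a−1) + (a+bc)/(b−1). -/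

import Mathlib

/-!
Differentiating the cosine law `cosh θ = (cosh x + cosh y cosh z) / (sinh y sinh z)` of a
right-angled hexagon gives `dθ` as a combination of `dx, dy, dz` with the common factor
`1 / (sinh θ sinh y sinh z)`. By the sine law this factor is `1 / √G`, where
`G = X² + Y² + Z² + 2XYZ - 1` is symmetric in `X = cosh x, Y = cosh y, Z = cosh z`. Along a
conformal deformation `cosh (l/2) = e^s cosh (l⁰/2)` one has `sinh l · dl/ds = 2 (cosh l + 1)`,
and substituting this into the three rows gives `-2 M(X, Y, Z) / √G`.
-/

open Real Filter Set

/-- Inverse hyperbolic cosine. -/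
noncomputable def arcosh (x : ℝ) : ℝ := Real.log (x + Real.sqrt (x ^ 2 - 1))

/-- The length of the side of a right-angled hyperbolic hexagon opposite the side of
length `x`, where the three pairwise non-adjacent sides have lengths `x, y, z`. -/
noncomputable def theta (x y z : ℝ) : ℝ :=
  _root_.arcosh ((Real.cosh x + Real.cosh y * Real.cosh z) / (Real.sinh y * Real.sinh z))

/-- The conformally deformed edge length `l` with `cosh (l/2) = e^s · cosh (c/2)`,
where `c` is the original edge length and `s` is the sum of the two conformal
factors at the ends of the edge. -/
noncomputable def hexLen (c s : ℝ) : ℝ := 2 * _root_.arcosh (Real.exp s * Real.cosh (c / 2))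

/-- The space `W^{ijk}` of conformal factors `p = (w_i, w_j, w_k)` for which the three
deformed edge lengths `l_jk, l_ki, l_ij` are defined and positive; here
`a = l⁰_jk`, `b = l⁰_ki`, `c = l⁰_ij`. -/
def Wijk (a b c : ℝ) : Set (ℝ × ℝ × ℝ) :=
  {p | 1 < Real.exp (p.2.1 + p.2.2) * Real.cosh (a / 2) ∧
       1 < Real.exp (p.2.2 + p.1) * Real.cosh (b / 2) ∧
       1 < Real.exp (p.1 + p.2.1) * Real.cosh (c / 2)}

/-- `θ^i_jk` as a function of `p = (w_i, w_j, w_k)`, where `a = l⁰_jk`, `b = l⁰_ki`,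
`c = l⁰_ij`: the boundary arc opposite the deformed edge `l_jk`. -/
noncomputable def thetaI (a b c : ℝ) (p : ℝ × ℝ × ℝ) : ℝ :=
  theta (hexLen a (p.2.1 + p.2.2)) (hexLen b (p.2.2 + p.1)) (hexLen c (p.1 + p.2.1))

/-- `θ^j_ki` as a function of `p = (w_i, w_j, w_k)`. -/
noncomputable def thetaJ (a b c : ℝ) (p : ℝ × ℝ × ℝ) : ℝ :=
  theta (hexLen b (p.2.2 + p.1)) (hexLen c (p.1 + p.2.1)) (hexLen a (p.2.1 + p.2.2))

/-- `θ^k_ij` as a function of `p = (w_i, w_j, w_k)`. -/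
noncomputable def thetaK (a b c : ℝ) (p : ℝ × ℝ × ℝ) : ℝ :=
  theta (hexLen c (p.1 + p.2.1)) (hexLen a (p.2.1 + p.2.2)) (hexLen b (p.2.2 + p.1))

/-- The Jacobian matrix `∂(θ^i_jk, θ^j_ki, θ^k_ij)/∂(w_i, w_j, w_k)` at `p`. -/
noncomputable def Jac (a b c : ℝ) (p : ℝ × ℝ × ℝ) : Matrix (Fin 3) (Fin 3) ℝ :=
  fun r s =>
    fderiv ℝ (![thetaI a b c, thetaJ a b c, thetaK a b c] r) p
      (![((1:ℝ),(0:ℝ),(0:ℝ)), ((0:ℝ),(1:ℝ),(0:ℝ)), ((0:ℝ),(0:ℝ),(1:ℝ))] s)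

/-- The symmetric matrix `M(a,b,c)` from the proof of Lemma 2.3, with
`a = cosh l_jk`, `b = cosh l_ki`, `c = cosh l_ij`. -/
noncomputable def Mmat (a b c : ℝ) : Matrix (Fin 3) (Fin 3) ℝ :=
  !![(c + a * b) / (b - 1) + (b + a * c) / (c - 1),
       (a + b - c + 1) / (c - 1), (a + c - b + 1) / (b - 1);
     (a + b - c + 1) / (c - 1),
       (c + a * b) / (a - 1) + (a + b * c) / (c - 1), (b + c - a + 1) / (a - 1);
     (a + c - b + 1) / (b - 1), (b + c - a + 1) / (a - 1),
       (b + a * c) / (a - 1) + (a + b * c) / (b - 1)]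

theorem arcosh_eq_real_arcosh : _root_.arcosh = Real.arcosh := rfl

noncomputable def hexGram (X Y Z : ℝ) : ℝ := X ^ 2 + Y ^ 2 + Z ^ 2 + 2 * X * Y * Z - 1

theorem hexGram_rotate (X Y Z : ℝ) : hexGram Y Z X = hexGram X Y Z := by
  unfold hexGram; ring

theorem hexGram_pos {X Y Z : ℝ} (hX : 0 ≤ X) (hY : 1 ≤ Y) (hZ : 1 ≤ Z) :
    0 < hexGram X Y Z := by
  have hXYZ : 0 ≤ X * Y * Z := by positivity
  unfold hexGram
  nlinarith

noncomputable def hexCos (x y z : ℝ) : ℝ := (cosh x + cosh y * cosh z) / (sinh y * sinh z)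

theorem theta_eq_arcosh_hexCos (x y z : ℝ) : theta x y z = Real.arcosh (hexCos x y z) := rfl

theorem hexCos_sq_sub_one {x y z : ℝ} (hy : sinh y ≠ 0) (hz : sinh z ≠ 0) :
    hexCos x y z ^ 2 - 1 = hexGram (cosh x) (cosh y) (cosh z) / (sinh y * sinh z) ^ 2 := by
  unfold hexCos hexGram
  field_simp
  linear_combination (-(sinh z ^ 2)) * sinh_sq y - (cosh y ^ 2 - 1) * sinh_sq z

theorem one_lt_hexCos (x : ℝ) {y z : ℝ} (hy : 0 < y) (hz : 0 < z) : 1 < hexCos x y z := by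
  have hsy := sinh_pos_iff.2 hy
  have hsz := sinh_pos_iff.2 hz
  have hpos : 0 < hexCos x y z := by unfold hexCos; positivity
  have hG := hexGram_pos (cosh_pos x).le (one_le_cosh y) (one_le_cosh z)
  have hsq : 0 < hexCos x y z ^ 2 - 1 := by
    rw [hexCos_sq_sub_one hsy.ne' hsz.ne']; positivity
  nlinarith

theorem sinh_theta_mul_sinh_mul_sinh (x : ℝ) {y z : ℝ} (hy : 0 < y) (hz : 0 < z) :
    sinh (theta x y z) * sinh y * sinh z = √(hexGram (cosh x) (cosh y) (cosh z)) := by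
  have hsy := sinh_pos_iff.2 hy
  have hsz := sinh_pos_iff.2 hz
  rw [theta_eq_arcosh_hexCos, Real.sinh_arcosh (one_lt_hexCos x hy hz).le,
    hexCos_sq_sub_one hsy.ne' hsz.ne', Real.sqrt_div' _ (by positivity),
    Real.sqrt_sq (by positivity)]
  field_simp

theorem hexLen_pos {t s : ℝ} (h : 1 < exp s * cosh (t / 2)) : 0 < hexLen t s :=
  mul_pos two_pos (Real.arcosh_pos h)

theorem one_lt_cosh_hexLen {t s : ℝ} (h : 1 < exp s * cosh (t / 2)) : 1 < cosh (hexLen t s) :=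
  one_lt_cosh.2 (hexLen_pos h).ne'

section Derivatives

variable {E : Type*} [NormedAddCommGroup E] [NormedSpace ℝ E] {p : E}

theorem hasFDerivAt_theta {x y z : E → ℝ} {x' y' z' : E →L[ℝ] ℝ}
    (hx : HasFDerivAt x x' p) (hy : HasFDerivAt y y' p) (hz : HasFDerivAt z z' p)
    (hy0 : 0 < y p) (hz0 : 0 < z p) :
    HasFDerivAt (fun q => theta (x q) (y q) (z q))
      ((sinh (theta (x p) (y p) (z p)) * sinh (y p) * sinh (z p))⁻¹ •
        (sinh (x p) • x'
          - ((cosh (x p) * cosh (y p) + cosh (z p)) / sinh (y p)) • y'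
          - ((cosh (x p) * cosh (z p) + cosh (y p)) / sinh (z p)) • z')) p := by
  have hsy := sinh_pos_iff.2 hy0
  have hsz := sinh_pos_iff.2 hz0
  have hN := hx.cosh.add (hy.cosh.mul hz.cosh)
  have hD := hy.sinh.mul hz.sinh
  have hκ := hN.mul ((hasDerivAt_inv (mul_pos hsy hsz).ne').comp_hasFDerivAt p hD)
  have hθ := (Real.hasDerivAt_arcosh (one_lt_hexCos (x p) hy0 hz0)).comp_hasFDerivAt p hκ
  rw [← Real.sinh_arcosh (one_lt_hexCos (x p) hy0 hz0).le] at hθ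
  refine hθ.congr_fderiv ?_
  ext v
  have hsθ : 0 < sinh (Real.arcosh (hexCos (x p) (y p) (z p))) :=
    sinh_pos_iff.2 (Real.arcosh_pos (one_lt_hexCos (x p) hy0 hz0))
  simp only [Pi.add_apply, Pi.mul_apply, Function.comp_apply, theta_eq_arcosh_hexCos, smul_add,
    smul_neg, neg_smul, add_apply, neg_apply, smul_apply, sub_apply, smul_eq_mul]
  field_simp
  linear_combination sinh (z p) * cosh (z p) * y' v * sinh_sq (y p)
    + sinh (y p) * cosh (y p) * z' v * sinh_sq (z p)

theorem hasDerivAt_hexLen {t s : ℝ} (h : 1 < exp s * cosh (t / 2)) :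
    HasDerivAt (hexLen t) (2 * (cosh (hexLen t s) + 1) / sinh (hexLen t s)) s := by
  refine (((Real.hasDerivAt_arcosh h).comp s
    ((hasDerivAt_exp s).mul_const (cosh (t / 2)))).const_mul 2).congr_deriv ?_
  rw [hexLen, arcosh_eq_real_arcosh, ← Real.sinh_arcosh h.le]
  set m := exp s * cosh (t / 2)
  have hcosh : cosh (Real.arcosh m) = m := Real.cosh_arcosh h.le
  have hsinh := sinh_pos_iff.2 (Real.arcosh_pos h)
  rw [cosh_two_mul, sinh_two_mul, hcosh]
  field_simp
  linear_combination -sinh_sq (Real.arcosh m) - (cosh (Real.arcosh m) + m) * hcosh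

theorem hasFDerivAt_theta_hexLen {u v w : E → ℝ} {u' v' w' : E →L[ℝ] ℝ} {a b c : ℝ}
    (hu : HasFDerivAt u u' p) (hv : HasFDerivAt v v' p) (hw : HasFDerivAt w w' p)
    (ha : 1 < exp (u p) * cosh (a / 2)) (hb : 1 < exp (v p) * cosh (b / 2))
    (hc : 1 < exp (w p) * cosh (c / 2)) :
    HasFDerivAt (fun q => theta (hexLen a (u q)) (hexLen b (v q)) (hexLen c (w q)))
      ((2 / √(hexGram (cosh (hexLen a (u p))) (cosh (hexLen b (v p)))
          (cosh (hexLen c (w p))))) •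
        ((cosh (hexLen a (u p)) + 1) • u'
          - ((cosh (hexLen a (u p)) * cosh (hexLen b (v p)) + cosh (hexLen c (w p)))
              / (cosh (hexLen b (v p)) - 1)) • v'
          - ((cosh (hexLen a (u p)) * cosh (hexLen c (w p)) + cosh (hexLen b (v p)))
              / (cosh (hexLen c (w p)) - 1)) • w')) p := by
  have hθ := hasFDerivAt_theta ((hasDerivAt_hexLen ha).comp_hasFDerivAt p hu)
    ((hasDerivAt_hexLen hb).comp_hasFDerivAt p hv) ((hasDerivAt_hexLen hc).comp_hasFDerivAt p hw)
    (hexLen_pos hb) (hexLen_pos hc)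
  refine hθ.congr_fderiv ?_
  simp only [Function.comp_apply]
  rw [sinh_theta_mul_sinh_mul_sinh _ (hexLen_pos hb) (hexLen_pos hc)]
  have hsx := sinh_pos_iff.2 (hexLen_pos ha)
  have hsy := sinh_pos_iff.2 (hexLen_pos hb)
  have hsz := sinh_pos_iff.2 (hexLen_pos hc)
  have hy1 := sub_pos.2 (one_lt_cosh_hexLen hb)
  have hz1 := sub_pos.2 (one_lt_cosh_hexLen hc)
  have hG := hexGram_pos (cosh_pos (hexLen a (u p))).le (one_le_cosh (hexLen b (v p)))
    (one_le_cosh (hexLen c (w p)))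
  ext q
  simp only [smul_apply, sub_apply, smul_eq_mul]
  field_simp
  rw [sinh_sq, sinh_sq]
  ring

end Derivatives

theorem stmt_6_general (a b c : ℝ)
    (p : ℝ × ℝ × ℝ) (hp : p ∈ Wijk a b c) :
    DifferentiableAt ℝ (thetaI a b c) p ∧
    DifferentiableAt ℝ (thetaJ a b c) p ∧
    DifferentiableAt ℝ (thetaK a b c) p ∧
    ∀ r s : Fin 3,
      Jac a b c p r s
        = -2 / (Real.sinh (thetaK a b c p) * Real.sinh (hexLen b (p.2.2 + p.1))
              * Real.sinh (hexLen a (p.2.1 + p.2.2)))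
          * Mmat (Real.cosh (hexLen a (p.2.1 + p.2.2)))
              (Real.cosh (hexLen b (p.2.2 + p.1)))
              (Real.cosh (hexLen c (p.1 + p.2.1))) r s := by
  obtain ⟨hjk, hki, hij⟩ := hp
  have hi := hasFDerivAt_fst (𝕜 := ℝ) (p := p)
  have hj := (hasFDerivAt_snd (𝕜 := ℝ) (p := p)).fst
  have hk := (hasFDerivAt_snd (𝕜 := ℝ) (p := p)).snd
  have dI : HasFDerivAt (thetaI a b c) _ p :=
    hasFDerivAt_theta_hexLen (hj.add hk) (hk.add hi) (hi.add hj) hjk hki hij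
  have dJ : HasFDerivAt (thetaJ a b c) _ p :=
    hasFDerivAt_theta_hexLen (hk.add hi) (hi.add hj) (hj.add hk) hki hij hjk
  have dK : HasFDerivAt (thetaK a b c) _ p :=
    hasFDerivAt_theta_hexLen (hi.add hj) (hj.add hk) (hk.add hi) hij hjk hki
  refine ⟨dI.differentiableAt, dJ.differentiableAt, dK.differentiableAt, fun r s => ?_⟩
  rw [thetaK, mul_right_comm, sinh_theta_mul_sinh_mul_sinh _ (hexLen_pos hjk) (hexLen_pos hki)]
  have hA := one_lt_cosh_hexLen hjk
  have hB := one_lt_cosh_hexLen hki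
  have hC := one_lt_cosh_hexLen hij
  set A := cosh (hexLen a (p.2.1 + p.2.2))
  set B := cosh (hexLen b (p.2.2 + p.1))
  set C := cosh (hexLen c (p.1 + p.2.1))
  have hGJ : hexGram B C A = hexGram A B C := hexGram_rotate A B C
  have hGK : hexGram C A B = hexGram A B C := (hexGram_rotate B C A).trans hGJ
  have hG := Real.sqrt_pos.2 (hexGram_pos (by linarith : 0 ≤ A) hB.le hC.le)
  have hA1 := (sub_pos.2 hA).ne'
  have hB1 := (sub_pos.2 hB).ne'
  have hC1 := (sub_pos.2 hC).ne'
  fin_cases r <;> fin_cases s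
  all_goals
    simp only [Jac, Mmat, Matrix.of_apply, Matrix.cons_val', Matrix.cons_val_fin_one,
      Matrix.cons_val_zero, Matrix.cons_val_one, Matrix.cons_val, Fin.isValue, Fin.mk_one,
      Fin.reduceFinMk, Fin.zero_eta, dI.fderiv, dJ.fderiv, dK.fderiv, hGJ, hGK, smul_add,
      smul_apply, sub_apply, add_apply, ContinuousLinearMap.comp_apply,
      ContinuousLinearMap.coe_fst', ContinuousLinearMap.coe_snd', smul_eq_mul,
      mul_one, mul_zero, add_zero, zero_add, sub_zero, zero_sub]
    field_simp
    ring

/-- at every point `p ∈ W^{ijk}`, writing `A = cosh l_jk`, `B = cosh l_ki`,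
`C = cosh l_ij` (evaluated at `p`), the Jacobian matrix
`∂(θ^i_jk, θ^j_ki, θ^k_ij)/∂(w_i, w_j, w_k)` equals
`−2/(sinh θ^k_ij · sinh l_ki · sinh l_jk)` times the symmetric matrix `M(A,B,C)`. -/
theorem stmt_6 (a b c : ℝ) (ha : 0 < a) (hb : 0 < b) (hc : 0 < c)
    (p : ℝ × ℝ × ℝ) (hp : p ∈ Wijk a b c) :
    DifferentiableAt ℝ (thetaI a b c) p ∧
    DifferentiableAt ℝ (thetaJ a b c) p ∧
    DifferentiableAt ℝ (thetaK a b c) p ∧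
    ∀ r s : Fin 3,
      Jac a b c p r s
        = -2 / (Real.sinh (thetaK a b c p) * Real.sinh (hexLen b (p.2.2 + p.1))
              * Real.sinh (hexLen a (p.2.1 + p.2.2)))
          * Mmat (Real.cosh (hexLen a (p.2.1 + p.2.2)))
              (Real.cosh (hexLen b (p.2.2 + p.1)))
              (Real.cosh (hexLen c (p.1 + p.2.1))) r s :=
  stmt_6_general a b c p hp
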